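/- Let T be a metric k-current of locally finite mass on a locally compact metric space X, with mass measure ‖T‖, and let E ⊃ {π₀ ≠ 0} be a Borel set. Then |T(π₀,…,π_k)| ≤ Lip(π₁|_E)⋯Lip(π_k|_E) ∫_E |π₀| d‖T‖ for every (π₀,…,π_k) ∈ LIP_c(X) × LIP_∞(X)^k, assuming the defining mass inequality |T(π₀,…,π_k)| ≤ Lip(π₁)⋯Lip(π_k) ∫ |π₀| d‖T‖ together with locality: T(π₀,…,π_k) depends only on the restrictions of π₁,…,π_k to any set containing spt π₀. -/
import Mathlib


open scoped NNReal Topology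

/-- `f ∈ LIP_∞(X)`: bounded Lipschitz. -/
def IsLipB {X : Type*} [MetricSpace X] (f : X → ℝ) : Prop :=
  (∃ K : ℝ≥0, LipschitzWith K f) ∧ ∃ M : ℝ, ∀ x, |f x| ≤ M

/-- `f ∈ LIP_c(X)`: compactly supported Lipschitz. -/
def IsLipC {X : Type*} [MetricSpace X] (f : X → ℝ) : Prop :=
  (∃ K : ℝ≥0, LipschitzWith K f) ∧ HasCompactSupport f

/-- Weak convergence in `LIP_∞(X)`: uniformly bounded Lipschitz constants and
uniform convergence on compact sets. -/
def ConvB {X : Type*} [MetricSpace X] (f : ℕ → X → ℝ) (g : X → ℝ) : Prop :=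
  (∃ K : ℝ≥0, ∀ n, LipschitzWith K (f n)) ∧
  ∀ s : Set X, IsCompact s → TendstoUniformlyOn (fun n => f n) g Filter.atTop s

/-- Weak convergence in `LIP_c(X)`: additionally all supports lie in a common
compact set. -/
def ConvC {X : Type*} [MetricSpace X] (f : ℕ → X → ℝ) (g : X → ℝ) : Prop :=
  ConvB f g ∧ ∃ s : Set X, IsCompact s ∧ ∀ n, tsupport (f n) ⊆ s

/-- A metric `k`-current in the sense of Ambrosio–Kirchheim/Lang: a `(k+1)`-linear,
sequentially continuous functional on `LIP_c(X) × LIP_∞(X)^k` satisfying locality. -/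
structure MetricCurrent (X : Type*) [MetricSpace X] (k : ℕ) where
  F : (X → ℝ) → (Fin k → X → ℝ) → ℝ
  add_fst : ∀ f f' g, IsLipC f → IsLipC f' → (∀ i, IsLipB (g i)) →
    F (f + f') g = F f g + F f' g
  smul_fst : ∀ (c : ℝ) f g, IsLipC f → (∀ i, IsLipB (g i)) → F (c • f) g = c * F f g
  add_snd : ∀ f g (i : Fin k) h, IsLipC f → (∀ j, IsLipB (g j)) → IsLipB h →
    F f (Function.update g i (g i + h)) = F f g + F f (Function.update g i h)
  smul_snd : ∀ f g (i : Fin k) (c : ℝ), IsLipC f → (∀ j, IsLipB (g j)) →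
    F f (Function.update g i (c • g i)) = c * F f g
  cont : ∀ (f : ℕ → X → ℝ) (g : ℕ → Fin k → X → ℝ) (f₀ : X → ℝ) (g₀ : Fin k → X → ℝ),
    (∀ n, IsLipC (f n)) → (∀ n i, IsLipB (g n i)) → IsLipC f₀ → (∀ i, IsLipB (g₀ i)) →
    ConvC f f₀ → (∀ i, ConvB (fun n => g n i) (g₀ i)) →
    Filter.Tendsto (fun n => F (f n) (g n)) Filter.atTop (𝓝 (F f₀ g₀))
  loc : ∀ f g, IsLipC f → (∀ i, IsLipB (g i)) →
    (∃ i : Fin k, ∃ c : ℝ, ∃ U : Set X, IsOpen U ∧ tsupport f ⊆ U ∧ ∀ x ∈ U, g i x = c) →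
    F f g = 0

open MeasureTheory in
/-- Refined mass bound: if `T` has locally finite mass with mass measure `μ`
(`hmass`) and satisfies locality in the sense that `T(π₀,…,π_k)` depends only on
the restrictions of `π₁,…,π_k` to (any set containing) `spt π₀` (`hloc`), then for
every Borel set `E ⊇ {π₀ ≠ 0}`,
`|T(π₀,…,π_k)| ≤ Lip(π₁|_E)⋯Lip(π_k|_E) ∫_E |π₀| dμ`. -/
theorem metricCurrent_mass_restrict {X : Type*} [MetricSpace X] [LocallyCompactSpace X]
    [MeasurableSpace X] [BorelSpace X]
    (k : ℕ) (T : MetricCurrent X k) (μ : Measure X) [IsFiniteMeasureOnCompacts μ]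
    (hmass : ∀ (f : X → ℝ) (g : Fin k → X → ℝ) (K : Fin k → ℝ≥0),
      IsLipC f → (∀ i, IsLipB (g i)) → (∀ i, LipschitzWith (K i) (g i)) →
      |T.F f g| ≤ (∏ i, (K i : ℝ)) * ∫ x, |f x| ∂μ)
    (hloc : ∀ (f : X → ℝ) (g g' : Fin k → X → ℝ),
      IsLipC f → (∀ i, IsLipB (g i)) → (∀ i, IsLipB (g' i)) →
      (∀ i, ∀ x ∈ tsupport f, g i x = g' i x) → T.F f g = T.F f g')
    (f : X → ℝ) (g : Fin k → X → ℝ) (hf : IsLipC f) (hg : ∀ i, IsLipB (g i))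
    (E : Set X) (hE : MeasurableSet E) (hfE : {x | f x ≠ 0} ⊆ E)
    (K : Fin k → ℝ≥0) (hK : ∀ i, LipschitzWith (K i) (fun x : E => g i x)) :
    |T.F f g| ≤ (∏ i, (K i : ℝ)) * ∫ x in E, |f x| ∂μ := by
  -- extend each `g i |_E` to a `K i`-Lipschitz function on `X`
  have hon : ∀ i, LipschitzOnWith (K i) (g i) E := fun i =>
    (lipschitzOnWith_iff_restrict (s := E)).mpr (hK i)
  choose g₁ hg₁lip hg₁eq using fun i => (hon i).extend_real
  -- bounds for `g i`
  choose M hM using fun i => (hg i).2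
  -- truncate the extension to make it bounded
  set g' : Fin k → X → ℝ := fun i x => max (-(M i)) (min (g₁ i x) (M i)) with hg'
  have hg'lip : ∀ i, LipschitzWith (K i) (g' i) := fun i =>
    (((hg₁lip i).min_const (M i)).const_max (-(M i)))
  have hg'bd : ∀ i x, |g' i x| ≤ |M i| := by
    intro i x
    rw [abs_le]
    constructor
    · exact le_trans (neg_le_neg (le_abs_self _)) (le_max_left _ _)
    · exact max_le (neg_le_abs _) (le_trans (min_le_right _ _) (le_abs_self _))
  have hg'B : ∀ i, IsLipB (g' i) := fun i => ⟨⟨K i, hg'lip i⟩, |M i|, hg'bd i⟩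
  -- `g' i = g i` on `E`
  have heqE : ∀ i, Set.EqOn (g i) (g' i) E := by
    intro i x hx
    have h1 : g₁ i x = g i x := (hg₁eq i hx).symm
    have h2 := hM i x
    rw [abs_le] at h2
    simp only [hg', h1]
    rw [min_eq_left h2.2, max_eq_right (by linarith [h2.1])]
  -- hence on `closure E ⊇ tsupport f`
  have hsupp : tsupport f ⊆ closure E :=
    closure_mono (fun x hx => hfE hx)
  have heq : ∀ i, ∀ x ∈ tsupport f, g i x = g' i x := by
    intro i x hx
    have hcont : Continuous (g i) := (hg i).1.choose_spec.continuous
    exact (heqE i).closure hcont (hg'lip i).continuous (hsupp hx)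
  rw [hloc f g g' hf hg hg'B heq]
  have hmain := hmass f g' K hf hg'B hg'lip
  -- `∫ x in E, |f x| = ∫ x, |f x|` since `f = 0` off `E`
  have hint : ∫ x in E, |f x| ∂μ = ∫ x, |f x| ∂μ := by
    apply setIntegral_eq_integral_of_forall_compl_eq_zero
    intro x hx
    by_contra h
    exact hx (hfE (fun h0 => h (by rw [h0, abs_zero])))
  rw [hint]
  exact hmain
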